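/- There exists a Direct Preference Process (𝒪, 𝒜, T, e, ≼) with ≼ a total preorder on Dist(Ω) for which no optimal policy exists. Concretely, with 𝒪 = {o⁰,o¹}, 𝒜 = {a⁰,a¹}, T = 2, uniform transition probabilities ρ(o | h,a) = 1/2, initial observation o⁰, and φ(A) = Σ_ω A(ω)·u(ω;a¹) if supp(A) ⊆ Cyl(h₁⁰) and φ(A) = −Σ_ω A(ω)·u(ω;a¹) otherwise (where u(ω;a¹) counts occurrences of a¹ in ω and h₁⁰ = (o⁰,a⁰,o⁰)), the total preorder A ≼_φ B ⟺ φ(A) ≤ φ(B) admits no ≼_φ-optimal policy. -/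

import Mathlib

open Finset

/-- A history: an initial observation together with a list of action-observation pairs. -/
abbrev Hist (O A : Type*) := O × List (A × O)

/-- The length (time index) of a history. -/
def hlen {O A : Type*} (h : Hist O A) : ℕ := h.2.length

/-- Append an action-observation pair to a history. -/
def hext {O A : Type*} (h : Hist O A) (a : A) (o : O) : Hist O A :=
  (h.1, h.2 ++ [(a, o)])

/-- The length-`t` prefix of a history/trajectory. -/
def hpre {O A : Type*} (h : Hist O A) (t : ℕ) : Hist O A := (h.1, h.2.take t)

section DPP

variable {O A : Type*} [Fintype O] [Fintype A] [DecidableEq O] [DecidableEq A]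

/-- The finite set of all length-`T` histories (trajectories). -/
def trajFinset (O A : Type*) [Fintype O] [Fintype A] [DecidableEq O] [DecidableEq A]
    (T : ℕ) : Finset (Hist O A) :=
  Finset.image (fun p : O × (Fin T → A × O) => ((p.1, List.ofFn p.2) : Hist O A))
    Finset.univ

/-- `π` is a policy: a distribution over actions for each history. -/
def IsPolicy (π : Hist O A → A → ℝ) : Prop :=
  ∀ h, (∀ a, 0 ≤ π h a) ∧ ∑ a, π h a = 1

/-- `(ρ0, ρ)` is an environment: an initial observation distribution and
history-dependent transition probabilities. -/
def IsEnv (ρ0 : O → ℝ) (ρ : Hist O A → A → O → ℝ) : Prop :=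
  ((∀ o, 0 ≤ ρ0 o) ∧ ∑ o, ρ0 o = 1) ∧
    ∀ h a, (∀ o, 0 ≤ ρ h a o) ∧ ∑ o, ρ h a o = 1

/-- `Dpi ρ π n h` : the distribution over trajectories induced by starting at `h`
(with `n` steps remaining) and following policy `π` in environment `ρ`. -/
noncomputable def Dpi (ρ : Hist O A → A → O → ℝ) (π : Hist O A → A → ℝ) :
    ℕ → Hist O A → Hist O A → ℝ
  | 0, h, ω => if ω = h then 1 else 0
  | n + 1, h, ω => ∑ a, π h a * ∑ o, ρ h a o * Dpi ρ π n (hext h a o) ω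

/-- `D^π(h)` with horizon `T`. -/
noncomputable def DpiH (T : ℕ) (ρ : Hist O A → A → O → ℝ) (π : Hist O A → A → ℝ)
    (h : Hist O A) : Hist O A → ℝ :=
  Dpi ρ π (T - hlen h) h

/-- `D^π(h · a)` : take action `a` at `h`, then follow `π`. -/
noncomputable def DpiA (T : ℕ) (ρ : Hist O A → A → O → ℝ) (π : Hist O A → A → ℝ)
    (h : Hist O A) (a : A) : Hist O A → ℝ :=
  fun ω => ∑ o, ρ h a o * Dpi ρ π (T - hlen h - 1) (hext h a o) ω

/-- Attainable histories in environment `(ρ0, ρ)`. -/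
inductive Attainable (ρ0 : O → ℝ) (ρ : Hist O A → A → O → ℝ) : Hist O A → Prop
  | base (o : O) : 0 < ρ0 o → Attainable ρ0 ρ (o, ([] : List (A × O)))
  | step (h : Hist O A) (a : A) (o : O) :
      Attainable ρ0 ρ h → 0 < ρ h a o → Attainable ρ0 ρ (hext h a o)

/-- A distribution over trajectories (length-`T` histories). -/
def IsTrajDist (T : ℕ) (D : Hist O A → ℝ) : Prop :=
  (∀ ω, 0 ≤ D ω) ∧ (∀ ω, D ω ≠ 0 → hlen ω = T) ∧
    ∑ ω ∈ trajFinset O A T, D ω = 1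

/-- A distribution over the attainable trajectories `Ω^e`. -/
def IsAttDist (T : ℕ) (ρ0 : O → ℝ) (ρ : Hist O A → A → O → ℝ)
    (D : Hist O A → ℝ) : Prop :=
  IsTrajDist T D ∧ ∀ ω, D ω ≠ 0 → Attainable ρ0 ρ ω

/-- Pointwise convex combination. -/
def mix {X : Type*} (α : ℝ) (A B : X → ℝ) : X → ℝ :=
  fun x => α * A x + (1 - α) * B x

/-- The restriction of `R` to `Dist(Ω^e)` is a total consistent preorder. -/
def RestrTotalConsistentPreorder (T : ℕ) (ρ0 : O → ℝ)
    (ρ : Hist O A → A → O → ℝ) (R : (Hist O A → ℝ) → (Hist O A → ℝ) → Prop) : Prop :=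
  (∀ D, IsAttDist T ρ0 ρ D → R D D) ∧
  (∀ D₁ D₂ D₃, IsAttDist T ρ0 ρ D₁ → IsAttDist T ρ0 ρ D₂ → IsAttDist T ρ0 ρ D₃ →
    R D₁ D₂ → R D₂ D₃ → R D₁ D₃) ∧
  (∀ D₁ D₂, IsAttDist T ρ0 ρ D₁ → IsAttDist T ρ0 ρ D₂ → (R D₁ D₂ ∨ R D₂ D₁)) ∧
  (∀ α : ℝ, 0 < α → α < 1 → ∀ D₁ D₂ D₃, IsAttDist T ρ0 ρ D₁ →
    IsAttDist T ρ0 ρ D₂ → IsAttDist T ρ0 ρ D₃ →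
    R D₁ D₂ → R (mix α D₁ D₃) (mix α D₂ D₃))

/-- `π` is a `≼`-optimal policy. -/
def OptimalPolicy (T : ℕ) (ρ0 : O → ℝ) (ρ : Hist O A → A → O → ℝ)
    (R : (Hist O A → ℝ) → (Hist O A → ℝ) → Prop) (π : Hist O A → A → ℝ) : Prop :=
  ∀ h, Attainable ρ0 ρ h → hlen h ≤ T →
    ∀ π', IsPolicy π' → R (DpiH T ρ π' h) (DpiH T ρ π h)

/-- The optimal action set of policy `π` at history `h`. -/
def OptActions (T : ℕ) (ρ : Hist O A → A → O → ℝ)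
    (R : (Hist O A → ℝ) → (Hist O A → ℝ) → Prop) (π : Hist O A → A → ℝ)
    (h : Hist O A) : Set A :=
  {a | ∀ a', R (DpiA T ρ π h a') (DpiA T ρ π h a)}

end DPP

/-- Number of occurrences of the action `a¹ = true` in a trajectory. -/
def countA1 (ω : Hist Bool Bool) : ℝ := ((ω.2.map Prod.fst).count true : ℝ)

/-- `ω` lies in the cylinder of `h₁⁰ = (o⁰, a⁰, o⁰)` (with `o⁰ = a⁰ = false`). -/
def inCyl (ω : Hist Bool Bool) : Prop :=
  ω.1 = false ∧ ω.2.take 1 = [(false, false)]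

open Classical in
/-- The performance function of Proposition 12. -/
noncomputable def propPhi (D : Hist Bool Bool → ℝ) : ℝ :=
  if ∀ ω, D ω ≠ 0 → inCyl ω then
    ∑ ω ∈ trajFinset Bool Bool 2, D ω * countA1 ω
  else
    -∑ ω ∈ trajFinset Bool Bool 2, D ω * countA1 ω

/-!
Against the policy that always plays `a⁰`, optimality at the root forces `φ(D^π(o⁰)) ≥ 0`.
Half of the mass of `D^π(o⁰)` leaves `Cyl(h₁⁰)`, so `φ(D^π(o⁰))` is minus the expected number
of `a¹`, which must therefore vanish; in particular `π` never plays `a¹` at `h₁⁰`.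
But `D^π(h₁⁰)` stays inside `Cyl(h₁⁰)`, where `φ` is plus the expected number of `a¹`, so at
`h₁⁰` the policy that always plays `a¹` scores `1` against the `0` of `π`.
-/

theorem IsPolicy.exists_pos {O A : Type*} [Fintype A] {π : Hist O A → A → ℝ}
    (hπ : IsPolicy π) (h : Hist O A) : ∃ a, 0 < π h a := by
  obtain ⟨a, -, ha⟩ := exists_lt_of_sum_lt (s := univ) (f := fun _ => (0 : ℝ))
    (g := π h) (by simp [(hπ h).2])
  exact ⟨a, ha⟩

def constPolicy {O A : Type*} [DecidableEq A] (a : A) : Hist O A → A → ℝ :=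
  fun _ b => if b = a then 1 else 0

theorem isPolicy_constPolicy {O A : Type*} [Fintype A] [DecidableEq A] (a : A) :
    IsPolicy (constPolicy a : Hist O A → A → ℝ) :=
  fun _ => ⟨fun b => by unfold constPolicy; split_ifs <;> norm_num, by simp [constPolicy]⟩

section Dpi

variable {O A : Type*} [Fintype O] [Fintype A] [DecidableEq O] [DecidableEq A]

theorem sum_trajFinset_two {M : Type*} [AddCommMonoid M] (f : Hist O A → M) :
    ∑ ω ∈ trajFinset O A 2, f ω = ∑ p : O × (A × O) × (A × O), f (p.1, [p.2.1, p.2.2]) := by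
  rw [trajFinset, sum_image fun p _ q _ hpq => by
    simp only [Prod.mk.injEq, List.ofFn_inj] at hpq
    exact Prod.ext hpq.1 hpq.2]
  exact Fintype.sum_equiv ((Equiv.refl O).prodCongr (finTwoArrowEquiv (A × O))) _ _
    fun p => by simp [finTwoArrowEquiv, List.ofFn_succ]

theorem Dpi_nonneg {ρ : Hist O A → A → O → ℝ} {π : Hist O A → A → ℝ}
    (hρ : ∀ h a o, 0 ≤ ρ h a o) (hπ : ∀ h a, 0 ≤ π h a) (n : ℕ) (h ω : Hist O A) :
    0 ≤ Dpi ρ π n h ω := by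
  induction n generalizing h with
  | zero => unfold Dpi; split_ifs <;> norm_num
  | succ n ih =>
    exact sum_nonneg fun a _ => mul_nonneg (hπ h a) <|
      sum_nonneg fun o _ => mul_nonneg (hρ h a o) (ih _)

theorem prefix_of_Dpi_ne_zero {ρ : Hist O A → A → O → ℝ} {π : Hist O A → A → ℝ} {n : ℕ}
    {h ω : Hist O A} (hω : Dpi ρ π n h ω ≠ 0) : ω.1 = h.1 ∧ h.2 <+: ω.2 := by
  induction n generalizing h with
  | zero =>
    unfold Dpi at hω
    split_ifs at hω with hωh
    · exact ⟨by rw [hωh], by rw [hωh]⟩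
    · exact absurd rfl hω
  | succ n ih =>
    obtain ⟨a, -, ha⟩ := exists_ne_zero_of_sum_ne_zero hω
    obtain ⟨o, -, ho⟩ := exists_ne_zero_of_sum_ne_zero (right_ne_zero_of_mul ha)
    obtain ⟨hobs, hpre⟩ := ih (right_ne_zero_of_mul ho)
    exact ⟨hobs, (List.prefix_append _ _).trans hpre⟩

end Dpi

noncomputable abbrev halfEnv : Hist Bool Bool → Bool → Bool → ℝ := fun _ _ _ => 1 / 2

abbrev rootHist : Hist Bool Bool := (false, [])

/-- The history `h₁⁰ = (o⁰, a⁰, o⁰)`. -/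
abbrev cylHist : Hist Bool Bool := (false, [(false, false)])

noncomputable def countMean (D : Hist Bool Bool → ℝ) : ℝ :=
  ∑ ω ∈ trajFinset Bool Bool 2, D ω * countA1 ω

theorem propPhi_of_forall_inCyl {D : Hist Bool Bool → ℝ} (hD : ∀ ω, D ω ≠ 0 → inCyl ω) :
    propPhi D = countMean D := by
  rw [propPhi, if_pos hD, countMean]

theorem propPhi_of_not_forall_inCyl {D : Hist Bool Bool → ℝ}
    (hD : ¬ ∀ ω, D ω ≠ 0 → inCyl ω) : propPhi D = -countMean D := by
  rw [propPhi, if_neg hD, countMean]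

theorem Dpi_two_rootHist (π : Hist Bool Bool → Bool → ℝ) (a₁ o₁ a₂ o₂ : Bool) :
    Dpi halfEnv π 2 rootHist (false, [(a₁, o₁), (a₂, o₂)]) =
      π rootHist a₁ * π (false, [(a₁, o₁)]) a₂ / 4 := by
  cases a₁ <;> cases o₁ <;> cases a₂ <;> cases o₂ <;>
    simp [Dpi, hext] <;> ring

theorem countMean_Dpi_constPolicy_false :
    countMean (Dpi halfEnv (constPolicy false) 2 rootHist) = 0 := by
  rw [countMean, sum_trajFinset_two]
  simp [Fintype.sum_prod_type, Dpi, hext, countA1, constPolicy]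

theorem propPhi_Dpi_rootHist {π : Hist Bool Bool → Bool → ℝ} (hπ : IsPolicy π) :
    propPhi (Dpi halfEnv π 2 rootHist) = -countMean (Dpi halfEnv π 2 rootHist) := by
  refine propPhi_of_not_forall_inCyl fun hcyl => ?_
  obtain ⟨a, ha⟩ := hπ.exists_pos rootHist
  obtain ⟨b, hb⟩ := hπ.exists_pos (false, [(a, true)])
  have hω := hcyl (false, [(a, true), (b, false)])
    (by rw [Dpi_two_rootHist]; positivity)
  simp [inCyl] at hω

theorem cylHist_true_eq_zero_of_countMean_nonpos {π : Hist Bool Bool → Bool → ℝ}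
    (hπ : IsPolicy π) (hmean : countMean (Dpi halfEnv π 2 rootHist) ≤ 0) :
    π cylHist true = 0 := by
  have hnonneg : ∀ ω ∈ trajFinset Bool Bool 2,
      0 ≤ Dpi halfEnv π 2 rootHist ω * countA1 ω := fun ω _ =>
    mul_nonneg (Dpi_nonneg (by norm_num) (fun h a => (hπ h).1 a) 2 _ ω) (Nat.cast_nonneg _)
  have hterm := (sum_eq_zero_iff_of_nonneg hnonneg).1 (hmean.antisymm (sum_nonneg hnonneg))
  have hroot : π rootHist true = 0 := by
    obtain ⟨b, hb⟩ := hπ.exists_pos (false, [(true, false)])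
    have := hterm (false, [(true, false), (b, false)]) (by cases b <;> decide)
    rw [Dpi_two_rootHist] at this
    cases b <;> simp [countA1] at this <;> exact this.resolve_right hb.ne'
  have hsum := (hπ rootHist).2
  rw [Fintype.sum_bool, hroot, zero_add] at hsum
  have := hterm (false, [(false, false), (true, false)]) (by decide)
  rw [Dpi_two_rootHist] at this
  simpa [countA1, hsum] using this

theorem propPhi_Dpi_cylHist (π : Hist Bool Bool → Bool → ℝ) :
    propPhi (Dpi halfEnv π 1 cylHist) = π cylHist true := by
  rw [propPhi_of_forall_inCyl fun ω hω => ?_, countMean, sum_trajFinset_two]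
  · simp [Fintype.sum_prod_type, Dpi, hext, countA1]
    ring
  · obtain ⟨hobs, hpre⟩ := prefix_of_Dpi_ne_zero hω
    exact ⟨hobs, (List.prefix_iff_eq_take.1 hpre).symm⟩

theorem exists_dpp_without_optimal_policy :
    ¬ ∃ π : Hist Bool Bool → Bool → ℝ, IsPolicy π ∧
        OptimalPolicy 2 (fun o => if o = false then 1 else 0)
          (fun _ _ _ => (1 : ℝ) / 2)
          (fun D₁ D₂ => propPhi D₁ ≤ propPhi D₂) π := by
  rintro ⟨π, hπ, hopt⟩
  have hroot_att : Attainable (fun o => if o = false then (1 : ℝ) else 0) halfEnv rootHist :=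
    .base false (by norm_num)
  have hcyl_att := Attainable.step _ false false hroot_att (by norm_num)
  have hroot : propPhi (Dpi halfEnv (constPolicy false) 2 rootHist) ≤
      propPhi (Dpi halfEnv π 2 rootHist) :=
    hopt _ hroot_att (by simp [hlen]) _ (isPolicy_constPolicy false)
  have hcyl : propPhi (Dpi halfEnv (constPolicy true) 1 cylHist) ≤
      propPhi (Dpi halfEnv π 1 cylHist) :=
    hopt _ hcyl_att (by simp [hlen, hext]) _ (isPolicy_constPolicy true)
  rw [propPhi_Dpi_rootHist (isPolicy_constPolicy false), countMean_Dpi_constPolicy_false,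
    propPhi_Dpi_rootHist hπ] at hroot
  have hπ_cyl := cylHist_true_eq_zero_of_countMean_nonpos hπ (by linarith)
  rw [propPhi_Dpi_cylHist, propPhi_Dpi_cylHist, hπ_cyl] at hcyl
  norm_num [constPolicy] at hcyl
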